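/- Let k and n be positive integers and r a nonnegative integer. Then, as an identity of polynomials in ℤ[x_1,…,x_n]: Σ_{y ∈ ℤ^k, y_1+⋯+y_k = 0} det_{1≤i,j≤k}( e_{r−i+j−k·y_i}(x_1,…,x_n) ) = e_r(x_1^k, x_2^k, …, x_n^k); only finitely many y ∈ ℤ^k with y_1+⋯+y_k = 0 give a nonzero determinant (since e_m = 0 unless 0 ≤ m ≤ n), so the sum is finite. -/

import Mathlib

open Finset

noncomputable def esymI {F : Type*} [CommRing F] (s : Multiset F) (r : ℤ) : F :=
  if r < 0 then 0 else ((Multiset.powersetCard r.toNat s).map Multiset.prod).sum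

noncomputable def eSym {F : Type*} [CommRing F] {n : ℕ} (x : Fin n → F) (r : ℤ) : F :=
  esymI (Finset.univ.val.map x) r

noncomputable def eDot {F : Type*} [Field F] {n : ℕ} (x : Fin n → F) (r : ℤ) : F :=
  esymI (Finset.univ.val.map x + Finset.univ.val.map fun i => (x i)⁻¹) r

noncomputable def eDDot {F : Type*} [Field F] {n : ℕ} (x : Fin n → F) (r : ℤ) : F :=
  esymI (Finset.univ.val.map x + Finset.univ.val.map (fun i => (x i)⁻¹) + {1}) r

def multPart (n : ℕ) (lam : ℕ → ℕ) (i : ℕ) : ℕ :=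
  ((Finset.range n).filter fun j => lam j = i).card

noncomputable def vHL {F : Type*} [Field F] (n : ℕ) (t : F) (lam : ℕ → ℕ) : F :=
  ∏ i ∈ (Finset.range n).image lam,
    ∏ j ∈ Finset.range (multPart n lam i), (1 - t ^ (j + 1)) / (1 - t)

open scoped Classical in
noncomputable def HLP {F : Type*} [Field F] (n : ℕ) (x : Fin n → F) (t : F) (lam : ℕ → ℕ) : F :=
  if ∀ i, n ≤ i → lam i = 0 then
    (vHL n t lam)⁻¹ *
      ∑ w : Equiv.Perm (Fin n),
        (∏ i : Fin n, x (w i) ^ lam i.val) *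
          ∏ p ∈ Finset.univ.filter fun p : Fin n × Fin n => p.1 < p.2,
            (x (w p.1) - t * x (w p.2)) / (x (w p.1) - x (w p.2))
  else 0

def pad {n B : ℕ} (f : Fin n → Fin B) : ℕ → ℕ :=
  fun i => if h : i < n then (f ⟨i, h⟩ : ℕ) else 0

def zchoose2 (y : ℤ) : ℤ := y * (y - 1) / 2

abbrev FQ (σ : Type*) : Type _ := FractionRing (MvPolynomial σ ℚ)

noncomputable def XX {σ : Type*} (s : σ) : FQ σ :=
  algebraMap (MvPolynomial σ ℚ) (FractionRing (MvPolynomial σ ℚ)) (MvPolynomial.X s)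

noncomputable def qPoch (a p : ℂ) : ℂ := ∏' j : ℕ, (1 - a * p ^ j)

noncomputable def theta (a p : ℂ) : ℂ := qPoch a p * qPoch (p / a) p

def gbinom {F : Type*} [CommRing F] (t : F) : ℕ → ℕ → F
  | _, 0 => 1
  | 0, _ + 1 => 0
  | m + 1, r + 1 => gbinom t m (r + 1) + t ^ (m - r) * gbinom t m r

noncomputable def gbinomZ {F : Type*} [CommRing F] (t : F) (m : ℕ) (r : ℤ) : F :=
  if r < 0 then 0 else gbinom t m r.toNat

def lodd {n B : ℕ} (f : Fin n → Fin B) : ℕ :=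
  (Finset.univ.filter fun i : Fin n => Odd (f i : ℕ)).card


/-!
Write `D_s(w) = det (e_{w i + j}(s))`, so the summand for `y` is `D_s(w)` with
`w i = r - i - k * y i`. Since `e_m(a :: s) = e_m(s) + a * e_{m-1}(s)`, multilinearity in the
rows gives `D_{a :: s}(w) = ∑_t a ^ |t| * D_s(w - 1_t)` over sets of rows `t`. After summing
over `y`, only `t = ∅` and `t = univ` survive: otherwise some `i ∈ t` has `i + 1 ∉ t`
(cyclically), the offsets of rows `i` and `i + 1` agree mod `k`, and exchanging these two rows
is a sign-reversing involution of the lattice `{w ≡ r - i - 1_t mod k, ∑ w = const}`.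
Hence the sum `F_s(r)` satisfies `F_{a :: s}(r) = F_s(r) + a ^ k * F_s(r - 1)`, the recursion
of `e_r` of the `k`-th powers, and for `s = ∅` only `y = 0`, `r = 0` contributes.
-/
section ElementarySymmetric

variable {R : Type*} [CommRing R]

lemma esymI_of_neg {s : Multiset R} {r : ℤ} (hr : r < 0) : esymI s r = 0 := if_pos hr

lemma esymI_of_card_lt {s : Multiset R} {r : ℤ} (hr : (Multiset.card s : ℤ) < r) :
    esymI s r = 0 := by
  rw [esymI, if_neg (by omega), Multiset.powersetCard_eq_empty _ (by omega),
    Multiset.map_zero, Multiset.sum_zero]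

lemma nonneg_and_le_card_of_esymI_ne_zero {s : Multiset R} {r : ℤ} (h : esymI s r ≠ 0) :
    0 ≤ r ∧ r ≤ Multiset.card s := by
  by_contra hr
  rcases not_and_or.mp hr with hr | hr
  · exact h (esymI_of_neg (by omega))
  · exact h (esymI_of_card_lt (by omega))

lemma esymI_empty (r : ℤ) : esymI (0 : Multiset R) r = if r = 0 then 1 else 0 := by
  rcases lt_trichotomy r 0 with hr | rfl | hr
  · rw [esymI_of_neg hr, if_neg hr.ne]
  · simp [esymI]
  · rw [esymI_of_card_lt (by simpa using hr), if_neg hr.ne']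

lemma esymI_cons (a : R) (s : Multiset R) (r : ℤ) :
    esymI (a ::ₘ s) r = esymI s r + a * esymI s (r - 1) := by
  rcases lt_trichotomy r 0 with hr | rfl | hr
  · rw [esymI_of_neg hr, esymI_of_neg hr, esymI_of_neg (by omega), mul_zero, add_zero]
  · simp [esymI]
  · obtain ⟨m, rfl⟩ : ∃ m : ℕ, r = m + 1 := ⟨(r - 1).toNat, by omega⟩
    simp only [esymI, add_sub_cancel_right, if_neg (show ¬((m : ℤ) + 1 < 0) by omega),
      if_neg (show ¬((m : ℤ) < 0) by omega), show ((m : ℤ) + 1).toNat = m + 1 by omega,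
      Int.toNat_natCast, Multiset.powersetCard_cons, Multiset.map_add, Multiset.sum_add,
      Multiset.map_map, Function.comp_def, Multiset.prod_cons, Multiset.sum_map_mul_left]

end ElementarySymmetric

theorem Matrix.det_add_smul_eq_sum {n R : Type*} [Fintype n] [DecidableEq n] [CommRing R]
    (A B : Matrix n n R) (a : R) :
    (A + a • B).det = ∑ t : Finset n, a ^ #t * Matrix.det (t.piecewise B A) := by
  rw [add_comm]
  refine (detRowAlternating.map_add_univ (a • B) A).trans (sum_congr rfl fun t _ => ?_)
  set P : n → n → R := t.piecewise B A
  have hrows : t.piecewise (a • B : n → n → R) A = t.piecewise (fun i => a • P i) P := by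
    ext i : 1
    by_cases hi : i ∈ t
    · simp only [P, Finset.piecewise, hi, if_true]
      rfl
    · simp only [P, Finset.piecewise, hi, if_false]
  rw [hrows]
  exact (detRowAlternating.map_piecewise_smul (fun _ => a) P t).trans (by rw [prod_const]; rfl)

theorem finsum_mem_eq_zero_of_involution {α M : Type*} [AddCommGroup M] {T : Set α}
    (f : α → M) (τ : α → α) (hτT : ∀ x ∈ T, τ x ∈ T) (hττ : ∀ x ∈ T, τ (τ x) = x)
    (hf : ∀ x ∈ T, f (τ x) = -f x) (hfix : ∀ x ∈ T, τ x = x → f x = 0) :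
    ∑ᶠ x ∈ T, f x = 0 := by
  by_cases hfin : (T ∩ Function.support f).Finite
  · have hmem : ∀ {x}, x ∈ hfin.toFinset → x ∈ T := fun hx => (hfin.mem_toFinset.mp hx).1
    rw [finsum_mem_eq_sum f hfin]
    refine sum_involution (fun x _ => τ x)
      (fun x hx => by rw [hf x (hmem hx), add_neg_cancel])
      (fun x hx hx0 hτx => hx0 (hfix x (hmem hx) hτx)) (fun x hx => ?_)
      (fun x hx => hττ x (hmem hx))
    obtain ⟨hxT, hx0⟩ := hfin.mem_toFinset.mp hx
    refine hfin.mem_toFinset.mpr ⟨hτT x hxT, ?_⟩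
    rw [Function.mem_support, hf x hxT, neg_ne_zero]
    exact hx0
  · exact finsum_mem_eq_zero_of_infinite hfin

theorem finsum_mem_finset_sum_comm {α ι M : Type*} [AddCommMonoid M] (T : Set α)
    (s : Finset ι) (f : ι → α → M) (h : ∀ i ∈ s, (Function.support (f i)).Finite) :
    ∑ᶠ x ∈ T, ∑ i ∈ s, f i x = ∑ i ∈ s, ∑ᶠ x ∈ T, f i x := by
  have hind : ∀ x, T.indicator (fun x => ∑ i ∈ s, f i x) x = ∑ i ∈ s, T.indicator (f i) x :=
    fun x => by rw [← sum_fn, indicator_sum, Finset.sum_apply]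
  simp only [finsum_mem_def, hind]
  exact finsum_sum_comm s _ fun i hi =>
    (h i hi).subset (Set.support_indicator.trans_subset Set.inter_subset_right)

open Fin.NatCast in
theorem Fin.exists_mem_add_one_notMem {k : ℕ} [NeZero k] {t : Finset (Fin k)} (ht : t.Nonempty)
    (ht' : t ≠ univ) : ∃ i ∈ t, i + 1 ∉ t := by
  by_contra! h
  obtain ⟨i, hi⟩ := ht
  have hadd : ∀ n : ℕ, i + (n : Fin k) ∈ t := by
    intro n
    induction n with
    | zero => simpa using hi
    | succ n ih => simpa [← add_assoc] using h _ ih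
  exact ht' (eq_univ_of_forall fun j => by simpa using hadd (j - i).val)

theorem Fin.val_add_one_modEq {k : ℕ} [NeZero k] (i : Fin k) :
    (((i + 1 : Fin k) : ℕ) : ℤ) ≡ (i : ℕ) + 1 [ZMOD k] := by
  rw [← Nat.cast_add_one, Int.natCast_modEq_iff, Fin.val_add, Fin.val_one']
  exact (Nat.mod_modEq _ k).trans ((Nat.mod_modEq 1 k).add_left _)

theorem image_sub_mul_sumZero {ι : Type*} [Fintype ι] {m : ℤ} (hm : m ≠ 0) (c : ι → ℤ) :
    (fun y l => c l - m * y l) '' {y : ι → ℤ | ∑ l, y l = 0} =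
      {w | (∀ l, w l ≡ c l [ZMOD m]) ∧ ∑ l, w l = ∑ l, c l} := by
  ext w
  constructor
  · rintro ⟨y, hy, rfl⟩
    refine ⟨fun l => Int.modEq_iff_dvd.mpr ⟨y l, by ring⟩, ?_⟩
    rw [sum_sub_distrib, ← mul_sum, Set.mem_ofPred.mp hy, mul_zero, sub_zero]
  · rintro ⟨hw, hsum⟩
    choose y hy using fun l => Int.modEq_iff_dvd.mp (hw l)
    refine ⟨y, ?_, funext fun l => by linarith [hy l]⟩
    have : m * ∑ l, y l = 0 := by
      rw [mul_sum, ← sum_congr rfl fun l _ => hy l, sum_sub_distrib, hsum, sub_self]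
    exact (mul_eq_zero.mp this).resolve_left hm

theorem finsum_sumZero_eq_zero_of_modEq {ι M : Type*} [Fintype ι] [DecidableEq ι]
    [AddCommGroup M] {m : ℤ} (hm : m ≠ 0) {f : (ι → ℤ) → M} {i j : ι}
    (hswap : ∀ w, f (w ∘ Equiv.swap i j) = -f w) (hdiag : ∀ w, w i = w j → f w = 0)
    {c : ι → ℤ} (hc : c i ≡ c j [ZMOD m]) :
    ∑ᶠ y ∈ {y : ι → ℤ | ∑ l, y l = 0}, f (fun l => c l - m * y l) = 0 := by
  have hinj : Set.InjOn (fun y l => c l - m * y l) {y : ι → ℤ | ∑ l, y l = 0} :=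
    fun y _ y' _ h => funext fun l => mul_left_cancel₀ hm (by linarith [congrFun h l])
  have hc' : ∀ l, c (Equiv.swap i j l) ≡ c l [ZMOD m] := by
    intro l
    rcases eq_or_ne l i with rfl | hli
    · simpa using hc.symm
    rcases eq_or_ne l j with rfl | hlj
    · simpa using hc
    · rw [Equiv.swap_apply_of_ne_of_ne hli hlj]
  rw [← finsum_mem_image hinj, image_sub_mul_sumZero hm]
  refine finsum_mem_eq_zero_of_involution f (· ∘ Equiv.swap i j) ?_ (fun w _ => by ext; simp)
    (fun w _ => hswap w) (fun w _ hw => hdiag w (by simpa using congrFun hw j))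
  rintro w ⟨hw, hsum⟩
  exact ⟨fun l => (hw _).trans (hc' l), (Equiv.sum_comp (Equiv.swap i j) w).trans hsum⟩

section EsymDet

variable {R : Type*} [CommRing R] {k : ℕ}

noncomputable def esymDet (s : Multiset R) (w : Fin k → ℤ) : R :=
  (Matrix.of fun i j : Fin k => esymI s (w i + j)).det

lemma esymDet_comp_swap (s : Multiset R) (w : Fin k → ℤ) {i j : Fin k} (hij : i ≠ j) :
    esymDet s (w ∘ Equiv.swap i j) = -esymDet s w := by
  have := Matrix.det_permute (Equiv.swap i j) (Matrix.of fun i j : Fin k => esymI s (w i + j))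
  rwa [Equiv.Perm.sign_swap hij, Units.val_neg, Units.val_one, Int.cast_neg, Int.cast_one,
    neg_one_mul] at this

lemma esymDet_eq_zero_of_eq (s : Multiset R) (w : Fin k → ℤ) {i j : Fin k} (hij : i ≠ j)
    (hw : w i = w j) : esymDet s w = 0 :=
  Matrix.det_zero_of_row_eq hij (funext fun l => by simp [hw])

lemma esymDet_cons (a : R) (s : Multiset R) (w : Fin k → ℤ) :
    esymDet (a ::ₘ s) w =
      ∑ t : Finset (Fin k), a ^ #t * esymDet s (fun i => w i - if i ∈ t then 1 else 0) := by
  have hrows : (Matrix.of fun i j : Fin k => esymI (a ::ₘ s) (w i + j)) =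
      Matrix.of (fun i j : Fin k => esymI s (w i + j)) +
        a • Matrix.of fun i j : Fin k => esymI s (w i - 1 + j) := by
    ext i j
    simp [esymI_cons, sub_add_eq_add_sub]
  rw [esymDet, hrows, Matrix.det_add_smul_eq_sum]
  refine sum_congr rfl fun t _ => congrArg _ (congrArg _ ?_)
  ext i j
  by_cases hi : i ∈ t <;> simp [Finset.piecewise, hi]

lemma finite_support_esymDet (s : Multiset R) :
    (Function.support (esymDet s : (Fin k → ℤ) → R)).Finite := by
  refine (Set.Finite.pi fun _ => Set.finite_Icc (-(k : ℤ)) (Multiset.card s)).subset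
    fun w hw i _ => ?_
  obtain ⟨j, hj⟩ : ∃ j : Fin k, esymI s (w i + j) ≠ 0 := by
    by_contra! h
    exact hw (Matrix.det_eq_zero_of_row_eq_zero i h)
  have := nonneg_and_le_card_of_esymI_ne_zero hj
  have := j.isLt
  constructor <;> omega

lemma finite_support_esymDet_sub_mul (hk : k ≠ 0) (s : Multiset R) (c : Fin k → ℤ) :
    (Function.support fun y : Fin k → ℤ => esymDet s fun i => c i - k * y i).Finite :=
  (finite_support_esymDet s).preimage fun y _ y' _ h =>
    funext fun l => mul_left_cancel₀ (Int.natCast_ne_zero.mpr hk) (by linarith [congrFun h l])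

lemma exists_perm_of_esymDet_empty_ne_zero {w : Fin k → ℤ}
    (h : esymDet (0 : Multiset R) w ≠ 0) :
    ∃ σ : Equiv.Perm (Fin k), ∀ i, w (σ i) + i = 0 := by
  rw [esymDet, Matrix.det_apply] at h
  obtain ⟨σ, -, hσ⟩ := exists_ne_zero_of_sum_ne_zero h
  refine ⟨σ, fun i => by_contra fun hi => hσ ?_⟩
  rw [prod_eq_zero (mem_univ i) (by simp [esymI_empty, hi]), smul_zero]

lemma eq_zero_of_forall_sub_mul_add_eq_zero (hk : 0 < k) {r : ℤ} {y : Fin k → ℤ}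
    (hy : ∑ i, y i = 0) (σ : Equiv.Perm (Fin k)) (h : ∀ i, r - σ i - k * y (σ i) + i = 0) :
    r = 0 ∧ y = 0 := by
  have hkr : (k : ℤ) * r = 0 := by
    have := sum_eq_zero (s := univ) fun i _ => h i
    rwa [sum_add_distrib, sum_sub_distrib, sum_sub_distrib, Equiv.sum_comp σ (fun i => (i : ℤ)),
      ← mul_sum, Equiv.sum_comp σ y, hy, sum_const, card_univ, Fintype.card_fin, nsmul_eq_mul,
      mul_zero, sub_zero, sub_add_cancel] at this
  have hr : r = 0 := (mul_eq_zero.mp hkr).resolve_left (by omega)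
  refine ⟨hr, funext fun l => ?_⟩
  obtain ⟨i, rfl⟩ := σ.surjective l
  have hky : (k : ℤ) * y (σ i) = i - σ i := by linarith [h i]
  have : (i : ℤ) - σ i = 0 :=
    Int.eq_zero_of_abs_lt_dvd ⟨_, hky.symm⟩ (abs_lt.mpr ⟨by omega, by omega⟩)
  simpa [hk.ne'] using hky.trans this

lemma esymDet_empty_neg_val : esymDet (0 : Multiset R) (fun i : Fin k => -(i : ℤ)) = 1 := by
  rw [esymDet, ← Matrix.det_one (n := Fin k)]
  congr 1
  ext i j
  simp [esymI_empty, Matrix.one_apply, neg_add_eq_zero, Fin.ext_iff]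

theorem finsum_sumZero_esymDet_empty (hk : 0 < k) (r : ℤ) :
    ∑ᶠ y ∈ {y : Fin k → ℤ | ∑ i, y i = 0},
      esymDet (0 : Multiset R) (fun i => r - i - k * y i) = esymI 0 r := by
  have hsupp : ∀ y : Fin k → ℤ, ∑ i, y i = 0 →
      esymDet (0 : Multiset R) (fun i => r - i - k * y i) ≠ 0 → r = 0 ∧ y = 0 := by
    intro y hy h
    obtain ⟨σ, hσ⟩ := exists_perm_of_esymDet_empty_ne_zero h
    exact eq_zero_of_forall_sub_mul_add_eq_zero hk hy σ hσ
  rw [finsum_mem_eq_sum_of_subset _ (t := {0}) (fun y ⟨hy, h⟩ => by simp [(hsupp y hy h).2])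
    (by simp), sum_singleton, esymI_empty]
  split_ifs with hr
  · subst hr
    simpa using esymDet_empty_neg_val
  · by_contra h
    exact hr (hsupp 0 (by simp) h).1

theorem finsum_sumZero_esymDet_shift_eq_zero (hk : 0 < k) (s : Multiset R) (r : ℤ)
    {t : Finset (Fin k)} (ht : t.Nonempty) (ht' : t ≠ univ) :
    ∑ᶠ y ∈ {y : Fin k → ℤ | ∑ i, y i = 0},
      esymDet s (fun i => (r - i - if i ∈ t then 1 else 0) - k * y i) = 0 := by
  have : NeZero k := NeZero.of_pos hk
  obtain ⟨i, hi, hi'⟩ := Fin.exists_mem_add_one_notMem ht ht'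
  have hne : i ≠ i + 1 := fun h => hi' (h ▸ hi)
  refine finsum_sumZero_eq_zero_of_modEq (by exact_mod_cast hk.ne')
    (fun w => esymDet_comp_swap s w hne) (fun w => esymDet_eq_zero_of_eq s w hne) ?_
  simp only [hi, hi', if_true, if_false]
  convert ((Fin.val_add_one_modEq i).sub_left r).symm using 1 <;> ring

theorem finsum_sumZero_esymDet (hk : 0 < k) (s : Multiset R) (r : ℤ) :
    ∑ᶠ y ∈ {y : Fin k → ℤ | ∑ i, y i = 0}, esymDet s (fun i => r - i - k * y i) =
      esymI (s.map (· ^ k)) r := by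
  induction s using Multiset.induction generalizing r with
  | empty => exact finsum_sumZero_esymDet_empty hk r
  | cons a s ih =>
    set H := {y : Fin k → ℤ | ∑ i, y i = 0}
    let c : Finset (Fin k) → Fin k → ℤ := fun t i => r - i - if i ∈ t then 1 else 0
    have hfin := fun t => finite_support_esymDet_sub_mul hk.ne' s (c t)
    have hpull : ∀ t, ∑ᶠ y ∈ H, a ^ #t * esymDet s (fun i => c t i - k * y i) =
        a ^ #t * ∑ᶠ y ∈ H, esymDet s (fun i => c t i - k * y i) := fun t =>
      ((AddMonoidHom.mulLeft _).map_finsum_mem' ((hfin t).inter_of_right H)).symm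
    calc ∑ᶠ y ∈ H, esymDet (a ::ₘ s) (fun i => r - i - k * y i)
        = ∑ᶠ y ∈ H, ∑ t, a ^ #t * esymDet s (fun i => c t i - k * y i) :=
          finsum_mem_congr rfl fun y _ => by
            rw [esymDet_cons]
            refine sum_congr rfl fun t _ => congrArg _ (congrArg _ (funext fun i => ?_))
            ring
      _ = ∑ t, a ^ #t * ∑ᶠ y ∈ H, esymDet s (fun i => c t i - k * y i) := by
          rw [finsum_mem_finset_sum_comm _ _ _ fun t _ =>
            (hfin t).subset (Function.support_mul_subset_right _ _)]
          exact sum_congr rfl fun t _ => hpull t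
      _ = ∑ t ∈ {∅, univ}, a ^ #t * ∑ᶠ y ∈ H, esymDet s (fun i => c t i - k * y i) := by
          refine (sum_subset (subset_univ _) fun t _ ht => ?_).symm
          simp only [mem_insert, mem_singleton, not_or] at ht
          rw [finsum_sumZero_esymDet_shift_eq_zero hk s r (nonempty_iff_ne_empty.mpr ht.1)
            ht.2, mul_zero]
      _ = esymI (s.map (· ^ k)) r + a ^ k * esymI (s.map (· ^ k)) (r - 1) := by
          have : Nonempty (Fin k) := ⟨⟨0, hk⟩⟩
          rw [sum_pair univ_nonempty.ne_empty.symm, ← ih r, ← ih (r - 1)]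
          simp [c, sub_right_comm _ _ (1 : ℤ)]
      _ = esymI ((a ::ₘ s).map (· ^ k)) r := by rw [Multiset.map_cons, esymI_cons]

end EsymDet

theorem affine_dual_JT_t_eq_one_general (k n : ℕ) (hk : 0 < k) (r : ℕ) :
    ∑ᶠ y ∈ {y : Fin k → ℤ | ∑ i, y i = 0},
        Matrix.det (Matrix.of fun i j : Fin k =>
          eSym (fun l : Fin n => (MvPolynomial.X l : MvPolynomial (Fin n) ℤ))
            ((r : ℤ) - ((i : ℕ) : ℤ) + ((j : ℕ) : ℤ) - (k : ℤ) * y i)) =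
      eSym (fun l : Fin n => (MvPolynomial.X l : MvPolynomial (Fin n) ℤ) ^ k) (r : ℤ) := by
  have hdet : ∀ y : Fin k → ℤ,
      Matrix.det (Matrix.of fun i j : Fin k =>
        eSym (fun l : Fin n => (MvPolynomial.X l : MvPolynomial (Fin n) ℤ))
          ((r : ℤ) - ((i : ℕ) : ℤ) + ((j : ℕ) : ℤ) - (k : ℤ) * y i)) =
      esymDet (univ.val.map MvPolynomial.X) (fun i => r - i - k * y i) := fun y => by
    rw [esymDet]
    congr 1
    ext i j
    rw [Matrix.of_apply, Matrix.of_apply, eSym]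
    ring_nf
  rw [finsum_mem_congr rfl fun y _ => hdet y, finsum_sumZero_esymDet hk, eSym, Multiset.map_map]
  rfl

/-- the `t = 1` specialisation of the affine dual Jacobi–Trudi formula:
`Σ_{y∈ℤ^k, |y|=0} det(e_{r−i+j−k·yᵢ}(x)) = e_r(x₁^k,…,xₙ^k)` in `ℤ[x₁,…,xₙ]`. -/
theorem affine_dual_JT_t_eq_one (k n : ℕ) (hk : 0 < k) (hn : 0 < n) (r : ℕ) :
    ∑ᶠ y ∈ {y : Fin k → ℤ | ∑ i, y i = 0},
        Matrix.det (Matrix.of fun i j : Fin k =>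
          eSym (fun l : Fin n => (MvPolynomial.X l : MvPolynomial (Fin n) ℤ))
            ((r : ℤ) - ((i : ℕ) : ℤ) + ((j : ℕ) : ℤ) - (k : ℤ) * y i)) =
      eSym (fun l : Fin n => (MvPolynomial.X l : MvPolynomial (Fin n) ℤ) ^ k) (r : ℤ) :=
  affine_dual_JT_t_eq_one_general k n hk r
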